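/- Let A ⊆ L(ω₁) be nonstationary and ξ : A → L(ω₁) injective. Then ξ extends to a continuous map φ : K_S → K_S with φ(∞) = ∞ and φ(α) = ∞ for every limit ordinal α ∉ A. -/

import Mathlib

/-!
Fix a club `C` missing `A`. Distinct ladders are almost disjoint, so any countable family of them
can be shrunk to pairwise disjoint tails by diagonalisation. The ordinals of `A` with the same
supremum of `C` below them form such a countable family, and tails chosen above that supremum
cannot meet the tails of another family. Sending each `α ∈ A` together with its tail to `ξ α` and
everything else to `∞` gives the map. A compact subset of `ω_S` contains only finitely many limit
ordinals, so by injectivity of `ξ` it pulls back to finitely many compact cones; the same finiteness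
gives continuity at a limit outside `A`, whose ladder meets each cone in finitely many points.
-/

open Topology OnePoint

noncomputable def omega1 : Ordinal := (Cardinal.aleph 1).ord

def IsClubIn (C : Set Ordinal) : Prop :=
  C ⊆ Set.Iio omega1 ∧
  (∀ o, o < omega1 → o ≠ 0 → (∀ p < o, ∃ q ∈ C, p < q ∧ q < o) → o ∈ C) ∧
  (∀ o, o < omega1 → ∃ p ∈ C, o < p)

/-- The ordinals below `ω₁`. -/
abbrev Om : Type _ := {o : Ordinal // o < omega1}

/-- A ladder system on `ω₁`: for each countable limit ordinal `α`, a strictly increasing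
sequence of non-limit ordinals converging to `α`. -/
structure LadderSystem where
  s : Om → ℕ → Om
  strictMono : ∀ α : Om, Order.IsSuccLimit (α : Ordinal) → StrictMono fun n => (s α n : Ordinal)
  notLimit : ∀ α : Om, Order.IsSuccLimit (α : Ordinal) → ∀ n, ¬ Order.IsSuccLimit (s α n : Ordinal)
  lt_self : ∀ α : Om, Order.IsSuccLimit (α : Ordinal) → ∀ n, (s α n : Ordinal) < (α : Ordinal)
  conv : ∀ α : Om, Order.IsSuccLimit (α : Ordinal) → ∀ β < (α : Ordinal), ∃ n, β < (s α n : Ordinal)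

/-- The ladder system topology on `ω₁`: non-limit ordinals are isolated, and a set is a
neighborhood of a limit ordinal `α` iff it contains `α` and cofinitely many points of the
ladder `s_α`. -/
def ladderTop (S : LadderSystem) : TopologicalSpace Om where
  IsOpen U := ∀ α ∈ U, Order.IsSuccLimit (α : Ordinal) → {n | S.s α n ∉ U}.Finite
  isOpen_univ := by intro α _ _; simp
  isOpen_inter := by
    intro U V hU hV α hα hlim
    refine ((hU α hα.1 hlim).union (hV α hα.2 hlim)).subset ?_
    intro n hn
    simp only [Set.mem_setOf_eq, Set.mem_inter_iff, Set.mem_union] at hn ⊢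
    tauto
  isOpen_sUnion := by
    intro T hT α hα hlim
    obtain ⟨t, ht, hαt⟩ := hα
    exact (hT t ht α hαt hlim).subset fun n hn h => hn ⟨t, ht, h⟩

/-- The topology of the one-point compactification `K_S` of the ladder system space. -/
def ksTop (S : LadderSystem) : TopologicalSpace (OnePoint Om) :=
  @OnePoint.instTopologicalSpace Om (ladderTop S)

open Filter Order

section GluePieces

variable {ι X Y : Type*}

noncomputable def gluePieces (A : Set ι) (P : ι → Set X) (g : ι → Y) (d : Y) (x : X) : Y :=
  open Classical in if h : ∃ i ∈ A, x ∈ P i then g h.choose else d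

lemma gluePieces_of_mem {A : Set ι} {P : ι → Set X} (g : ι → Y) (d : Y)
    (hP : A.PairwiseDisjoint P) {i : ι} (hi : i ∈ A) {x : X} (hx : x ∈ P i) :
    gluePieces A P g d x = g i := by
  have h : ∃ j ∈ A, x ∈ P j := ⟨i, hi, hx⟩
  rw [gluePieces, dif_pos h, hP.elim_set h.choose_spec.1 hi x h.choose_spec.2 hx]

lemma gluePieces_of_forall_notMem {A : Set ι} {P : ι → Set X} (g : ι → Y) (d : Y) {x : X}
    (hx : ∀ i ∈ A, x ∉ P i) : gluePieces A P g d x = d := by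
  rw [gluePieces, dif_neg]
  rintro ⟨i, hi, hxi⟩
  exact hx i hi hxi

lemma preimage_gluePieces {A : Set ι} {P : ι → Set X} (g : ι → Y) {d : Y}
    (hP : A.PairwiseDisjoint P) {s : Set Y} (hd : d ∉ s) :
    gluePieces A P g d ⁻¹' s = ⋃ i ∈ {i ∈ A | g i ∈ s}, P i := by
  ext x
  simp only [Set.mem_preimage, Set.mem_iUnion₂, Set.mem_ofPred_eq, exists_prop]
  constructor
  · intro hx
    by_contra! h
    rw [gluePieces_of_forall_notMem g d fun i hi hxi => h i ⟨hi, ?_⟩ hxi] at hx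
    · exact hd hx
    · rwa [← gluePieces_of_mem g d hP hi hxi]
  · rintro ⟨i, ⟨hi, hgi⟩, hxi⟩
    rwa [gluePieces_of_mem g d hP hi hxi]

end GluePieces

lemma OnePoint.continuous_elim_infty {X Y : Type*} [TopologicalSpace X] [TopologicalSpace Y]
    {f : X → OnePoint Y} (hf : Continuous f)
    (hK : ∀ K : Set Y, IsClosed K → IsCompact K → IsCompact (f ⁻¹' ((↑) '' K))) :
    Continuous fun x : OnePoint X => x.elim ∞ f := by
  refine (OnePoint.continuous_iff _).mpr ⟨?_, hf⟩
  refine (hasBasis_coclosedCompact.tendsto_iff OnePoint.hasBasis_nhds_infty).mpr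
    fun K ⟨hKc, hKk⟩ => ⟨f ⁻¹' ((↑) '' K), ⟨?_, hK K hKc hKk⟩, fun x hx => ?_⟩
  · exact (OnePoint.isClosed_image_coe.mpr ⟨hKc, hKk⟩).preimage hf
  · rw [← OnePoint.compl_image_coe]
    exact hx

section Clubs

/-- `0` when no point of `C` lies below `o`. -/
noncomputable def supBelow (C : Set Ordinal) (o : Ordinal) : Ordinal := sSup (C ∩ Set.Iio o)

variable {C : Set Ordinal} {o o' c : Ordinal}

lemma le_supBelow (hc : c ∈ C) (hco : c < o) : c ≤ supBelow C o :=
  le_csSup ⟨o, fun _ hx => hx.2.le⟩ ⟨hc, hco⟩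

lemma supBelow_le : supBelow C o ≤ o :=
  csSup_le' fun _ hx => hx.2.le

lemma exists_mem_lt_of_lt_supBelow {x : Ordinal} (hx : x < supBelow C o) :
    ∃ c ∈ C, c < o ∧ x < c := by
  obtain ⟨c, ⟨hcC, hco⟩, hxc⟩ := exists_lt_of_lt_csSup' hx
  exact ⟨c, hcC, hco, hxc⟩

lemma le_supBelow_of_supBelow_lt (h : supBelow C o < supBelow C o') : o ≤ supBelow C o' := by
  obtain ⟨c, hcC, hco', hc⟩ := exists_mem_lt_of_lt_supBelow h
  have hoc : o ≤ c := not_lt.mp fun hco => (le_supBelow hcC hco).not_gt hc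
  exact hoc.trans (le_supBelow hcC hco')

lemma IsClubIn.supBelow_lt (hC : IsClubIn C) (ho : o < omega1) (ho₀ : o ≠ 0) (hoC : o ∉ C) :
    supBelow C o < o := by
  refine supBelow_le.lt_of_ne fun h => hoC (hC.2.1 o ho ho₀ fun p hp => ?_)
  obtain ⟨c, hcC, hco, hpc⟩ := exists_mem_lt_of_lt_supBelow (h.symm ▸ hp : p < supBelow C o)
  exact ⟨c, hcC, hpc, hco⟩

lemma countable_Iio_of_lt_omega1 (hc : c < omega1) : (Set.Iio c).Countable := by
  rw [← Cardinal.le_aleph0_iff_set_countable, Cardinal.mk_Iio_ordinal, Cardinal.lift_le_aleph0,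
    ← Cardinal.lt_aleph_one_iff]
  exact Cardinal.lt_ord.mp hc

/-- The ordinals outside a club with the same `supBelow` are bounded by the next club point. -/
lemma IsClubIn.countable_setOf_supBelow_eq (hC : IsClubIn C) (δ : Ordinal) :
    {α : Om | (α : Ordinal) ∉ C ∧ supBelow C α = δ}.Countable := by
  rcases Set.eq_empty_or_nonempty {α : Om | (α : Ordinal) ∉ C ∧ supBelow C α = δ} with h | h
  · exact h ▸ Set.countable_empty
  obtain ⟨α₀, -, rfl⟩ := h
  obtain ⟨c, hcC, hc⟩ := hC.2.2 _ (supBelow_le.trans_lt α₀.2)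
  refine ((countable_Iio_of_lt_omega1 (hC.1 hcC)).preimage Subtype.val_injective).mono ?_
  rintro α ⟨hαC, hα⟩
  show (α : Ordinal) < c
  refine lt_of_le_of_ne (not_lt.mp fun hcα => ?_) fun h => hαC (by rwa [h])
  exact (le_supBelow hcC hcα).not_gt (hα ▸ hc)

end Clubs

lemma exists_pairwiseDisjoint_image_Ici_of_countable {ι X : Type*} (f : ι → ℕ → X) {B : Set ι}
    (hB : B.Countable)
    (hf : ∀ i ∈ B, ∀ j ∈ B, i ≠ j → {n | f i n ∈ Set.range (f j)}.Finite) :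
    ∃ N : ι → ℕ, B.PairwiseDisjoint fun i => f i '' Set.Ici (N i) := by
  obtain ⟨r, hr⟩ := Set.countable_iff_exists_injOn.mp hB
  -- the sequence `f i` only has to avoid the finitely many `f j` with `r j < r i`
  have key : ∀ i ∈ B, ∃ M, ∀ j ∈ B, r j < r i → Disjoint (f i '' Set.Ici M) (Set.range (f j)) := by
    intro i hi
    have hprev : {j ∈ B | r j < r i}.Finite :=
      Set.Finite.of_finite_image ((Set.finite_Iio (r i)).subset (Set.image_subset_iff.mpr
        fun j hj => hj.2)) (hr.mono fun j hj => hj.1)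
    obtain ⟨M, hM⟩ := (hprev.biUnion fun j hj =>
      hf i hi j hj.1 (by rintro rfl; exact lt_irrefl _ hj.2)).bddAbove
    refine ⟨M + 1, fun j hj hji => Set.disjoint_left.mpr ?_⟩
    rintro _ ⟨n, hn, rfl⟩ hmem
    have := hM (Set.mem_biUnion (x := j) ⟨hj, hji⟩ hmem)
    simp only [Set.mem_Ici] at hn
    omega
  choose! N hN using key
  refine ⟨N, fun i hi j hj hij => ?_⟩
  rcases lt_or_gt_of_ne ((hr.ne_iff hi hj).mpr hij) with h | h
  · exact ((hN j hj i hi h).mono_right (Set.image_subset_range _ _)).symm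
  · exact (hN i hi j hj h).mono_right (Set.image_subset_range _ _)

namespace LadderSystem

variable (S : LadderSystem) {α β : Om}

lemma eventually_lt_s (hα : IsSuccLimit (α : Ordinal)) {γ : Ordinal} (hγ : γ < α) :
    ∀ᶠ n in atTop, γ < S.s α n := by
  obtain ⟨n₀, hn₀⟩ := S.conv α hα γ hγ
  filter_upwards [eventually_ge_atTop n₀] with n hn
  exact hn₀.trans_le ((S.strictMono α hα).monotone hn)

lemma finite_setOf_s_le (hα : IsSuccLimit (α : Ordinal)) {γ : Ordinal} (hγ : γ < α) :
    {n | (S.s α n : Ordinal) ≤ γ}.Finite := by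
  simpa only [← Nat.cofinite_eq_atTop, eventually_cofinite, not_lt] using S.eventually_lt_s hα hγ

lemma s_injective (hα : IsSuccLimit (α : Ordinal)) : Function.Injective (S.s α) :=
  .of_comp (S.strictMono α hα).injective

/-- The ladder of the larger limit eventually lies above the smaller one, while the ladder of the
smaller one lies below it. -/
lemma finite_setOf_s_mem_range (hα : IsSuccLimit (α : Ordinal)) (hβ : IsSuccLimit (β : Ordinal))
    (hne : α ≠ β) : {n | S.s α n ∈ Set.range (S.s β)}.Finite := by
  rcases lt_or_gt_of_ne (Subtype.coe_injective.ne hne) with hlt | hlt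
  · refine (((S.finite_setOf_s_le hβ hlt).image (S.s β)).preimage
      (S.s_injective hα).injOn).subset ?_
    rintro n ⟨m, hm⟩
    exact ⟨m, show (S.s β m : Ordinal) ≤ α by rw [hm]; exact (S.lt_self α hα n).le, hm⟩
  · refine (S.finite_setOf_s_le hα hlt).subset ?_
    rintro n ⟨m, hm⟩
    show (S.s α n : Ordinal) ≤ β
    rw [← hm]
    exact (S.lt_self β hβ m).le

/-- The ordinals of `A` with the same `supBelow C` form a countable family, and tails lying above
`supBelow C α` separate different families. -/
lemma exists_pairwiseDisjoint_image_Ici {A : Set Om} (hA : ∀ α ∈ A, IsSuccLimit (α : Ordinal))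
    {C : Set Ordinal} (hC : IsClubIn C) (hAC : ∀ α ∈ A, (α : Ordinal) ∉ C) :
    ∃ N : Om → ℕ, A.PairwiseDisjoint fun α => S.s α '' Set.Ici (N α) := by
  set g : Om → Ordinal := fun α => supBelow C α
  have hfiber (δ : Ordinal) :
      ∃ N : Om → ℕ, {α ∈ A | g α = δ}.PairwiseDisjoint fun α => S.s α '' Set.Ici (N α) :=
    exists_pairwiseDisjoint_image_Ici_of_countable S.s
      ((hC.countable_setOf_supBelow_eq δ).mono fun α (hα : α ∈ A ∧ g α = δ) =>
        show (α : Ordinal) ∉ C ∧ supBelow C α = δ from ⟨hAC α hα.1, hα.2⟩)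
      fun α hα β hβ => S.finite_setOf_s_mem_range (hA α hα.1) (hA β hβ.1)
  choose N₁ hN₁ using hfiber
  have habove : ∀ α ∈ A, ∃ M, ∀ n ≥ M, g α < S.s α n := fun α hα =>
    eventually_atTop.mp (S.eventually_lt_s (hA α hα)
      (hC.supBelow_lt α.2 (hA α hα).ne_bot (hAC α hα)))
  choose! N₂ hN₂ using habove
  have hcross : ∀ α ∈ A, ∀ β ∈ A, g α < g β →
      Disjoint (Set.range (S.s α)) (S.s β '' Set.Ici (N₂ β)) := by
    intro α hα β hβ hg
    refine Set.disjoint_left.mpr ?_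
    rintro _ ⟨n, rfl⟩ ⟨m, hm, h⟩
    have : (S.s β m : Ordinal) < g β := h ▸ (S.lt_self α (hA α hα) n).trans_le
      (le_supBelow_of_supBelow_lt hg)
    exact this.not_gt (hN₂ β hβ m hm)
  have htail₁ (α : Om) :
      S.s α '' Set.Ici (max (N₁ (g α) α) (N₂ α)) ⊆ S.s α '' Set.Ici (N₁ (g α) α) :=
    Set.image_mono (Set.Ici_subset_Ici.mpr (le_max_left _ _))
  have htail₂ (α : Om) :
      S.s α '' Set.Ici (max (N₁ (g α) α) (N₂ α)) ⊆ S.s α '' Set.Ici (N₂ α) :=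
    Set.image_mono (Set.Ici_subset_Ici.mpr (le_max_right _ _))
  refine ⟨fun α => max (N₁ (g α) α) (N₂ α), fun α hα β hβ hne => ?_⟩
  rcases lt_trichotomy (g α) (g β) with hg | hg | hg
  · exact (hcross α hα β hβ hg).mono (Set.image_subset_range _ _) (htail₂ β)
  · exact (hN₁ (g α) ⟨hα, rfl⟩ ⟨hβ, hg.symm⟩ hne).mono (htail₁ α) (hg ▸ htail₁ β)
  · exact ((hcross β hβ α hα hg).mono (Set.image_subset_range _ _) (htail₂ α)).symm

/-- A basic neighbourhood of `α`. -/
def cone (α : Om) (N : ℕ) : Set Om := insert α (S.s α '' Set.Ici N)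

lemma eq_of_mem_cone (hα : IsSuccLimit (α : Ordinal)) {N : ℕ} {γ : Om} (hγ : γ ∈ S.cone α N)
    (hγlim : IsSuccLimit (γ : Ordinal)) : γ = α := by
  rcases hγ with rfl | ⟨n, -, rfl⟩
  · rfl
  · exact absurd hγlim (S.notLimit α hα n)

lemma pairwiseDisjoint_cone {A : Set Om} (hA : ∀ α ∈ A, IsSuccLimit (α : Ordinal)) {N : Om → ℕ}
    (hN : A.PairwiseDisjoint fun α => S.s α '' Set.Ici (N α)) :
    A.PairwiseDisjoint fun α => S.cone α (N α) := by
  intro α hα β hβ hne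
  refine Set.disjoint_insert_left.mpr ⟨fun h => hne (S.eq_of_mem_cone (hA β hβ) h (hA α hα)),
    Set.disjoint_insert_right.mpr ⟨fun h => ?_, hN hα hβ hne⟩⟩
  exact hne (S.eq_of_mem_cone (hA α hα) (Set.mem_insert_of_mem _ h) (hA β hβ)).symm

lemma isOpen_insert_setOf_not_isSuccLimit (γ : Om) :
    IsOpen[ladderTop S] (insert γ {δ : Om | ¬ IsSuccLimit (δ : Ordinal)}) := by
  rintro δ hδ hlim
  obtain rfl : δ = γ := hδ.resolve_right (not_not.mpr hlim)
  exact Set.finite_empty.subset fun n hn => hn (Or.inr (S.notLimit δ hlim n))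

/-- Each point has a neighbourhood containing no other limit ordinal. -/
lemma finite_setOf_isSuccLimit_of_isCompact {K : Set Om} (hK : @IsCompact Om (ladderTop S) K) :
    {γ ∈ K | IsSuccLimit (γ : Ordinal)}.Finite := by
  let := ladderTop S
  obtain ⟨t, -, hKt⟩ := hK.elim_nhds_subcover _ fun γ _ =>
    (S.isOpen_insert_setOf_not_isSuccLimit γ).mem_nhds (Set.mem_insert γ _)
  refine t.finite_toSet.subset fun γ ⟨hγK, hγ⟩ => ?_
  obtain ⟨δ, hδt, hγδ⟩ := Set.mem_iUnion₂.mp (hKt hγK)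
  rwa [hγδ.resolve_right (not_not.mpr hγ)]

lemma tendsto_s (hα : IsSuccLimit (α : Ordinal)) :
    Tendsto (S.s α) atTop (@nhds Om (ladderTop S) α) := by
  let := ladderTop S
  refine tendsto_nhds.mpr fun U hU hαU => ?_
  rw [← Nat.cofinite_eq_atTop, mem_cofinite]
  exact hU α hαU hα

lemma isCompact_cone (hα : IsSuccLimit (α : Ordinal)) (N : ℕ) :
    @IsCompact Om (ladderTop S) (S.cone α N) := by
  let := ladderTop S
  rw [cone, ← Set.range_add_eq_image_Ici]
  exact ((S.tendsto_s hα).comp (tendsto_add_atTop_nat N)).isCompact_insert_range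

lemma continuous_of_tendsto_s {Y : Type*} [TopologicalSpace Y] {f : Om → Y}
    (hf : ∀ α : Om, IsSuccLimit (α : Ordinal) → Tendsto (f ∘ S.s α) atTop (𝓝 (f α))) :
    Continuous[ladderTop S, _] f := by
  let := ladderTop S
  refine continuous_def.mpr fun V hV α hα hlim => ?_
  have := (hf α hlim).eventually (hV.mem_nhds hα)
  rwa [← Nat.cofinite_eq_atTop, eventually_cofinite] at this


lemma notMem_cone_of_notMem {A : Set Om} (hA : ∀ α ∈ A, IsSuccLimit (α : Ordinal)) (N : Om → ℕ)
    (hα : IsSuccLimit (α : Ordinal)) (hαA : α ∉ A) : ∀ β ∈ A, α ∉ S.cone β (N β) :=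
  fun β hβ hαβ => hαA (S.eq_of_mem_cone (hA β hβ) hαβ hα ▸ hβ)

lemma finite_setOf_mem_of_isCompact {A : Set Om} {ξ : Om → Om} (hξinj : Set.InjOn ξ A)
    (hξL : ∀ α ∈ A, IsSuccLimit (ξ α : Ordinal)) {K : Set Om}
    (hK : @IsCompact Om (ladderTop S) K) : {α ∈ A | (ξ α : OnePoint Om) ∈ (↑) '' K}.Finite := by
  refine Set.Finite.of_finite_image ((S.finite_setOf_isSuccLimit_of_isCompact hK).subset ?_)
    (hξinj.mono fun α hα => hα.1)
  rintro _ ⟨α, ⟨hα, hαK⟩, rfl⟩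
  exact ⟨OnePoint.coe_injective.mem_set_image.mp hαK, hξL α hα⟩

variable {A : Set Om} {N : Om → ℕ} {ξ : Om → Om}

lemma isCompact_preimage_gluePieces_cone (hA : ∀ α ∈ A, IsSuccLimit (α : Ordinal))
    (hP : A.PairwiseDisjoint fun α => S.cone α (N α)) (hξinj : Set.InjOn ξ A)
    (hξL : ∀ α ∈ A, IsSuccLimit (ξ α : Ordinal)) {K : Set Om}
    (hK : @IsCompact Om (ladderTop S) K) :
    @IsCompact Om (ladderTop S) (gluePieces A (fun α => S.cone α (N α))
      (fun α => (ξ α : OnePoint Om)) ∞ ⁻¹' ((↑) '' K)) := by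
  let := ladderTop S
  rw [preimage_gluePieces _ hP OnePoint.infty_notMem_image_coe]
  exact (S.finite_setOf_mem_of_isCompact hξinj hξL hK).isCompact_biUnion
    fun α hα => S.isCompact_cone (hA α hα.1) _

/-- At a limit outside `A` the map is `∞`, and a compact set is hit only through the cones of
finitely many `β ∈ A`, each almost disjoint from the ladder. -/
lemma continuous_gluePieces_cone (hA : ∀ α ∈ A, IsSuccLimit (α : Ordinal))
    (hP : A.PairwiseDisjoint fun α => S.cone α (N α)) (hξinj : Set.InjOn ξ A)
    (hξL : ∀ α ∈ A, IsSuccLimit (ξ α : Ordinal)) :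
    Continuous[ladderTop S, ksTop S]
      (gluePieces A (fun α => S.cone α (N α)) (fun α => (ξ α : OnePoint Om)) ∞) := by
  let := ladderTop S
  refine S.continuous_of_tendsto_s fun α hα => ?_
  by_cases hαA : α ∈ A
  · rw [gluePieces_of_mem _ _ hP hαA (Set.mem_insert α _)]
    refine tendsto_const_nhds.congr' ?_
    filter_upwards [eventually_ge_atTop (N α)] with n hn
    exact (gluePieces_of_mem (fun β => (ξ β : OnePoint Om)) ∞ hP hαA
      (Set.mem_insert_of_mem _ ⟨n, hn, rfl⟩)).symm
  rw [gluePieces_of_forall_notMem _ _ (S.notMem_cone_of_notMem hA N hα hαA)]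
  refine OnePoint.hasBasis_nhds_infty.tendsto_right_iff.mpr fun K ⟨_, hK⟩ => ?_
  rw [← Nat.cofinite_eq_atTop, eventually_cofinite]
  refine ((S.finite_setOf_mem_of_isCompact hξinj hξL hK).biUnion fun β hβ =>
    S.finite_setOf_s_mem_range hα (hA β hβ.1) fun h => hαA (h ▸ hβ.1)).subset fun n hn => ?_
  have hmem : S.s α n ∈ gluePieces A (fun α => S.cone α (N α))
      (fun α => (ξ α : OnePoint Om)) ∞ ⁻¹' ((↑) '' K) := by
    rwa [Set.mem_ofPred_eq, ← OnePoint.compl_image_coe, Set.notMem_compl_iff] at hn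
  rw [preimage_gluePieces _ hP OnePoint.infty_notMem_image_coe] at hmem
  obtain ⟨β, hβ, hnβ⟩ := Set.mem_iUnion₂.mp hmem
  rcases hnβ with h | ⟨m, -, h⟩
  · exact absurd (h ▸ hA β hβ.1) (S.notLimit α hα n)
  · exact Set.mem_biUnion hβ ⟨m, h⟩

end LadderSystem

/-- Every injection `ξ` of a nonstationary set `A` of limit ordinals into the limit
ordinals extends to a continuous self-map of `K_S` sending `∞` and every limit ordinal
outside `A` to `∞`. -/
theorem stmt15 (S : LadderSystem) (A : Set Om) (hA : ∀ α ∈ A, Order.IsSuccLimit (α : Ordinal))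
    (hns : ∃ C : Set Ordinal, IsClubIn C ∧ ∀ α ∈ A, (α : Ordinal) ∉ C)
    (ξ : Om → Om) (hξinj : Set.InjOn ξ A) (hξL : ∀ α ∈ A, Order.IsSuccLimit ((ξ α : Om) : Ordinal)) :
    ∃ φ : OnePoint Om → OnePoint Om,
      Continuous[ksTop S, ksTop S] φ ∧ φ ∞ = ∞ ∧
      (∀ α ∈ A, φ ↑α = ↑(ξ α)) ∧
      (∀ α : Om, Order.IsSuccLimit (α : Ordinal) → α ∉ A → φ ↑α = ∞) := by
  obtain ⟨C, hC, hAC⟩ := hns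
  obtain ⟨N, hN⟩ := S.exists_pairwiseDisjoint_image_Ici hA hC hAC
  have hP := S.pairwiseDisjoint_cone hA hN
  let φ := gluePieces A (fun α => S.cone α (N α)) (fun α => (ξ α : OnePoint Om)) ∞
  refine ⟨fun x => x.elim ∞ φ, ?_, rfl, fun α hα => ?_, fun α hα hαA => ?_⟩
  · let := ladderTop S
    exact OnePoint.continuous_elim_infty (S.continuous_gluePieces_cone hA hP hξinj hξL)
      fun K _ hK => S.isCompact_preimage_gluePieces_cone hA hP hξinj hξL hK
  · exact gluePieces_of_mem (fun β => (ξ β : OnePoint Om)) ∞ hP hα (Set.mem_insert α _)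
  · exact gluePieces_of_forall_notMem (fun β => (ξ β : OnePoint Om)) ∞
      (S.notMem_cone_of_notMem hA N hα hαA)
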